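/- Let v₁ and v₂ be elements of 𝓛ₙ of the same co-rank. Then there exists an automorphism φ of 𝓛ₙ with φ(v₁) = v₂. -/

import Mathlib

@[ext] structure Cube (n : ℕ) where
  pos : Finset (Fin n)
  neg : Finset (Fin n)
  disj : Disjoint pos neg

namespace Cube
variable {n : ℕ}

instance : PartialOrder (Cube n) where
  le x y := y.pos ⊆ x.pos ∧ y.neg ⊆ x.neg
  le_refl x := ⟨subset_rfl, subset_rfl⟩
  le_trans x y z h₁ h₂ := ⟨h₂.1.trans h₁.1, h₂.2.trans h₁.2⟩
  le_antisymm x y h₁ h₂ :=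
    Cube.ext (subset_antisymm h₂.1 h₁.1) (subset_antisymm h₂.2 h₁.2)

instance : OrderTop (Cube n) where
  top := ⟨∅, ∅, by simp⟩
  le_top x := ⟨Finset.empty_subset _, Finset.empty_subset _⟩

instance : SemilatticeSup (Cube n) where
  sup x y := ⟨x.pos ∩ y.pos, x.neg ∩ y.neg,
    x.disj.mono Finset.inter_subset_left Finset.inter_subset_left⟩
  le_sup_left x y := ⟨Finset.inter_subset_left, Finset.inter_subset_left⟩
  le_sup_right x y := ⟨Finset.inter_subset_right, Finset.inter_subset_right⟩
  sup_le x y z hx hy := ⟨Finset.subset_inter hx.1 hy.1, Finset.subset_inter hx.2 hy.2⟩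

/-- The reflection `Δ(x, y)` of `y` through the centre of `x`. -/
def delta (x y : Cube n) : Cube n :=
  ⟨x.pos ∪ (y.neg \ x.neg), x.neg ∪ (y.pos \ x.pos), by
    simp only [Finset.disjoint_union_left, Finset.disjoint_union_right]
    refine ⟨⟨x.disj, Finset.sdiff_disjoint⟩, Finset.disjoint_sdiff, ?_⟩
    exact y.disj.symm.mono Finset.sdiff_subset Finset.sdiff_subset⟩

lemma delta_le (x y : Cube n) : delta x y ≤ x :=
  ⟨Finset.subset_union_left, Finset.subset_union_left⟩

/-- The co-rank of a face of the `n`-cube. -/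
def corank (x : Cube n) : ℕ := (x.pos ∪ x.neg).card

/-- The set of coatoms of `𝓛ₙ` lying above `a`. -/
def coatomsAbove (a : Cube n) : Set (Cube n) := {c | corank c = 1 ∧ a ≤ c}

/-- `A` is an MR-subalgebra of `𝓛ₙ`. -/
def IsMRSub (A : Set (Cube n)) : Prop :=
  ⊤ ∈ A ∧ (∀ x ∈ A, ∀ y ∈ A, x ⊔ y ∈ A) ∧
    (∀ x ∈ A, ∀ y ∈ A, y ≤ x → delta x y ∈ A) ∧
    (∀ x ∈ A, ∀ y ∈ A, ∃ m ∈ A, IsGLB {x, delta (x ⊔ y) y} m)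

/-- The coatoms of a subalgebra `A`: maximal elements of `A \ {⊤}`. -/
def coAt (A : Set (Cube n)) : Set (Cube n) :=
  {a | a ∈ A ∧ a ≠ ⊤ ∧ ∀ b ∈ A, b ≠ ⊤ → a ≤ b → b = a}

/-- The coatoms `a` of `A` with `|𝒞ₐ| = i`. -/
def typeSet (A : Set (Cube n)) (i : ℕ) : Set (Cube n) :=
  {a | a ∈ coAt A ∧ (coatomsAbove a).ncard = i}

/-- An order automorphism of `𝓛ₙ` is a cubic automorphism when it preserves `Δ`. -/
def IsAut (φ : Cube n ≃o Cube n) : Prop :=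
  ∀ x y : Cube n, y ≤ x → φ (delta x y) = delta (φ x) (φ y)

/-- The set of automorphisms of `𝓛ₙ`. -/
def AutSet (n : ℕ) : Set (Cube n ≃o Cube n) := {φ | IsAut φ}

/-- An automorphism of the subposet `A` preserving `Δ`. -/
def IsSubAut {A : Set (Cube n)} (ψ : A ≃o A) : Prop :=
  ∀ (x y : A), (y : Cube n) ≤ (x : Cube n) → ∀ h : delta ↑x ↑y ∈ A,
    (ψ ⟨delta ↑x ↑y, h⟩ : Cube n) = delta ↑(ψ x) ↑(ψ y)

end Cube

/-!
Changing the signs of the coordinates in a set `S` and permuting the coordinates both commute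
with `Δ`, so they are automorphisms of `𝓛ₙ`. Changing the signs on `x⁻` moves `x` to the
positive face `⟨x⁺ ∪ x⁻, ∅⟩`, and positive faces of equal co-rank are moved into each other by
a permutation of the coordinates.
-/

open Finset Pointwise

lemma Finset.exists_perm_smul_eq_of_card_eq {α : Type*} [DecidableEq α] {s t : Finset α}
    (h : #s = #t) : ∃ σ : Equiv.Perm α, σ • s = t := by
  have := Set.powersetCard.isPretransitive (α := α) (n := #s)
  obtain ⟨σ, hσ⟩ := MulAction.exists_smul_eq (Equiv.Perm α)
    (Set.powersetCard.ofCard rfl) (Set.powersetCard.ofCard h.symm)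
  exact ⟨σ, congrArg Subtype.val hσ⟩

namespace Cube

variable {n : ℕ}

lemma le_iff {x y : Cube n} : x ≤ y ↔ y.pos ⊆ x.pos ∧ y.neg ⊆ x.neg := Iff.rfl

lemma IsAut.trans {φ ψ : Cube n ≃o Cube n} (hφ : IsAut φ) (hψ : IsAut ψ) :
    IsAut (φ.trans ψ) := fun x y hyx => by
  simp only [OrderIso.trans_apply, hφ x y hyx, hψ _ _ (φ.monotone hyx)]

def ofPos (s : Finset (Fin n)) : Cube n := ⟨s, ∅, disjoint_empty_right s⟩

section SignFlip

def signFlipFun (S : Finset (Fin n)) (x : Cube n) : Cube n :=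
  ⟨x.pos \ S ∪ x.neg ∩ S, x.neg \ S ∪ x.pos ∩ S, by
    rw [disjoint_left]
    intro i
    have : i ∈ x.pos → i ∉ x.neg := fun h => disjoint_left.1 x.disj h
    simp only [mem_union, mem_sdiff, mem_inter]
    tauto⟩

variable {S : Finset (Fin n)} {x : Cube n} {i : Fin n}

lemma mem_signFlipFun_pos :
    i ∈ (signFlipFun S x).pos ↔ if i ∈ S then i ∈ x.neg else i ∈ x.pos := by
  by_cases hi : i ∈ S <;> simp [signFlipFun, hi]

lemma mem_signFlipFun_neg :
    i ∈ (signFlipFun S x).neg ↔ if i ∈ S then i ∈ x.pos else i ∈ x.neg := by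
  by_cases hi : i ∈ S <;> simp [signFlipFun, hi]

lemma signFlipFun_involutive (S : Finset (Fin n)) : Function.Involutive (signFlipFun S) := by
  intro x
  ext i <;> by_cases hi : i ∈ S <;> simp [mem_signFlipFun_pos, mem_signFlipFun_neg, hi]

lemma signFlipFun_mono (S : Finset (Fin n)) : Monotone (signFlipFun S) := by
  intro x y hxy
  constructor <;> intro i <;> by_cases hi : i ∈ S <;>
    simp only [mem_signFlipFun_pos, mem_signFlipFun_neg, hi, if_true, if_false] <;>
    first | exact fun h => hxy.1 h | exact fun h => hxy.2 h

def signFlip (S : Finset (Fin n)) : Cube n ≃o Cube n where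
  toEquiv := (signFlipFun_involutive S).toPerm
  map_rel_iff' {x y} := by
    show signFlipFun S x ≤ signFlipFun S y ↔ x ≤ y
    refine ⟨fun h => ?_, fun h => signFlipFun_mono S h⟩
    simpa only [signFlipFun_involutive S _] using signFlipFun_mono S h

lemma signFlip_apply (S : Finset (Fin n)) (x : Cube n) : signFlip S x = signFlipFun S x := rfl

lemma signFlip_delta (S : Finset (Fin n)) (x y : Cube n) :
    signFlip S (delta x y) = delta (signFlip S x) (signFlip S y) := by
  ext i <;> by_cases hi : i ∈ S <;>
    simp [signFlip_apply, mem_signFlipFun_pos, mem_signFlipFun_neg, delta, hi]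

lemma isAut_signFlip (S : Finset (Fin n)) : IsAut (signFlip S) :=
  fun x y _ => signFlip_delta S x y

lemma signFlip_signFlip (S : Finset (Fin n)) (x : Cube n) : signFlip S (signFlip S x) = x :=
  signFlipFun_involutive S x

lemma signFlip_neg_self (x : Cube n) : signFlip x.neg x = ofPos (x.pos ∪ x.neg) := by
  have hdisj {i : Fin n} (hi : i ∈ x.neg) : i ∉ x.pos := disjoint_right.1 x.disj hi
  ext i <;> by_cases hi : i ∈ x.neg <;>
    simp [signFlip_apply, mem_signFlipFun_pos, mem_signFlipFun_neg, ofPos, hi, hdisj]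

lemma signFlip_neg_ofPos (x : Cube n) : signFlip x.neg (ofPos (x.pos ∪ x.neg)) = x := by
  rw [← signFlip_neg_self, signFlip_signFlip]

end SignFlip

def permute (σ : Equiv.Perm (Fin n)) : Cube n ≃o Cube n where
  toFun x := ⟨σ • x.pos, σ • x.neg, (disjoint_image (MulAction.injective σ)).2 x.disj⟩
  invFun x := ⟨σ⁻¹ • x.pos, σ⁻¹ • x.neg, (disjoint_image (MulAction.injective σ⁻¹)).2 x.disj⟩
  left_inv x := by ext <;> simp
  right_inv x := by ext <;> simp
  map_rel_iff' := by simp [le_iff]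

lemma permute_delta (σ : Equiv.Perm (Fin n)) (x y : Cube n) :
    permute σ (delta x y) = delta (permute σ x) (permute σ y) := by
  ext : 1 <;> simp [permute, delta, smul_finset_union, smul_finset_sdiff]

lemma isAut_permute (σ : Equiv.Perm (Fin n)) : IsAut (permute σ) :=
  fun x y _ => permute_delta σ x y

lemma permute_ofPos (σ : Equiv.Perm (Fin n)) (s : Finset (Fin n)) :
    permute σ (ofPos s) = ofPos (σ • s) := by
  ext : 1 <;> simp [permute, ofPos]

end Cube

/-- Any two elements of `𝓛ₙ` of the same co-rank are related by an
automorphism of `𝓛ₙ`. -/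
theorem aut_transitive_on_corank (n : ℕ) (v₁ v₂ : Cube n)
    (h : Cube.corank v₁ = Cube.corank v₂) :
    ∃ φ ∈ Cube.AutSet n, φ v₁ = v₂ := by
  open Cube in
  obtain ⟨σ, hσ⟩ := exists_perm_smul_eq_of_card_eq h
  refine ⟨(signFlip v₁.neg).trans ((permute σ).trans (signFlip v₂.neg)),
    (isAut_signFlip _).trans ((isAut_permute σ).trans (isAut_signFlip _)), ?_⟩
  simp only [OrderIso.trans_apply, signFlip_neg_self, permute_ofPos, hσ, signFlip_neg_ofPos]
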